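/- In any m-dimensional abstract rigidity matroid on K(V), every complete edge set K(U) with U ⊆ V and |U| = m+2 is a circuit. -/

import Mathlib

open Matroid Set

/-- A circuit of a matroid: a minimal dependent set. -/
def Matroid.IsCircuit' {α : Type*} (M : Matroid α) (C : Set α) : Prop :=
  M.Dep C ∧ ∀ D, D ⊂ C → M.Indep D

/-- A cocircuit: a circuit of the dual matroid. -/
def Matroid.IsCocircuit' {α : Type*} (M : Matroid α) (C : Set α) : Prop :=
  M✶.IsCircuit' C

/-- A hyperplane: a maximal subset of the ground set not containing a basis. -/
def Matroid.IsHyperplane {α : Type*} (M : Matroid α) (H : Set α) : Prop :=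
  H ⊆ M.E ∧ (¬ ∃ B ⊆ H, M.IsBase B) ∧
    ∀ H', H ⊂ H' → H' ⊆ M.E → ∃ B ⊆ H', M.IsBase B

/-- The rank of a set: the size of a largest independent subset. -/
noncomputable def Matroid.rk {α : Type*} (M : Matroid α) (X : Set α) : ℕ :=
  sSup {n | ∃ I ⊆ X, M.Indep I ∧ I.ncard = n}

/-- `cK U` is the edge set of the complete graph on the vertex set `U`. -/
def cK {V : Type*} (U : Set V) : Set (Sym2 V) :=
  {e | ¬ e.IsDiag ∧ ∀ v ∈ e, v ∈ U}

/-- The support (set of endpoints) of an edge set. -/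
def supp {V : Type*} (E : Set (Sym2 V)) : Set V := {v | ∃ e ∈ E, v ∈ e}

/-- An edge set is rigid if its closure is the complete graph on its support. -/
def Rigid {V : Type*} (A : Matroid (Sym2 V)) (E : Set (Sym2 V)) : Prop :=
  A.closure E = cK (supp E)

/-- `A` is an `m`-dimensional abstract rigidity matroid on `K(W)`. -/
def IsARMOn {V : Type*} (m : ℕ) (W : Set V) (A : Matroid (Sym2 V)) : Prop :=
  A.E = cK W ∧
  (∀ E F : Set (Sym2 V), E ⊆ cK W → F ⊆ cK W →
    (supp E ∩ supp F).ncard < m →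
    A.closure (E ∪ F) ⊆ cK (supp E) ∪ cK (supp F)) ∧
  (∀ E F : Set (Sym2 V), E ⊆ cK W → F ⊆ cK W →
    Rigid A E → Rigid A F → m ≤ (supp E ∩ supp F).ncard →
    Rigid A (E ∪ F))

/-- The star of a vertex: all edges containing it. -/
def starv {V : Type*} (v : V) : Set (Sym2 V) := {e | ¬ e.IsDiag ∧ v ∈ e}

/-- `C` is a vertex star minus `m-1` edges. -/
def IsStarMinus {V : Type*} (m : ℕ) (C : Set (Sym2 V)) : Prop :=
  ∃ v : V, ∃ D ⊆ starv v, D.ncard = m - 1 ∧ C = starv v \ D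

/-- The valence (degree) of a vertex in an edge set. -/
noncomputable def valence {V : Type*} (C : Set (Sym2 V)) (v : V) : ℕ :=
  {e ∈ C | v ∈ e}.ncard

/-- `bigstar V' = K(V) \ K(V \ V')`. -/
def bigstar {V : Type*} (V' : Set V) : Set (Sym2 V) :=
  cK (univ : Set V) \ cK (V'ᶜ)

/-- The family `H_m(V)` of unions of two complete graphs covering `V` and
meeting in `m-1` vertices. -/
def HmFam (m : ℕ) (V : Type*) : Set (Set (Sym2 V)) :=
  {H | ∃ V₁ V₂ : Set V, V₁ ∪ V₂ = univ ∧ (V₁ ∩ V₂).ncard = m - 1 ∧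
    ¬ V₁ ⊆ V₂ ∧ ¬ V₂ ⊆ V₁ ∧ H = cK V₁ ∪ cK V₂}

/-- The family `H_m^{(1)}(K(X))` of sets `Δ_v^A` relative to a vertex set `X`. -/
def Hm1Fam {V : Type*} (m : ℕ) (X : Set V) : Set (Set (Sym2 V)) :=
  {H | ∃ v ∈ X, ∃ A ⊆ X \ {v}, A.ncard = m - 1 ∧
    H = cK ({v} ∪ A) ∪ cK (X \ {v})}

/-! `K(U)` minus an edge `uv` is independent: it is `K(U \ {v})`, independent because a complete
graph on at most `m + 1` vertices is built by repeatedly adding a vertex of degree at most `m`,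
which (C1) allows, together with `v` joined to the `m` vertices of `U \ {u, v}`.
`K(U)` is dependent: `K(U \ {v})` and `K(U \ {u})` are rigid and share `m` vertices, so by (C2)
their union `K(U) \ {uv}` is rigid and spans `uv`. -/

section

variable {V : Type*}

lemma mem_cK {X : Set V} {a b : V} : s(a, b) ∈ cK X ↔ a ≠ b ∧ a ∈ X ∧ b ∈ X := by
  simp [cK, Sym2.mk_isDiag_iff, Sym2.mem_iff]

lemma cK_mono {X Y : Set V} (h : X ⊆ Y) : cK X ⊆ cK Y :=
  fun _ he => ⟨he.1, fun v hv => h (he.2 v hv)⟩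

@[simp]
lemma cK_empty : cK (∅ : Set V) = ∅ := by
  ext e
  induction e using Sym2.ind with
  | _ a b => simp [mem_cK]

@[simp]
lemma supp_empty : supp (∅ : Set (Sym2 V)) = ∅ := by
  simp [supp]

lemma supp_union (E F : Set (Sym2 V)) : supp (E ∪ F) = supp E ∪ supp F := by
  ext v
  simp [supp, or_and_right, exists_or]

lemma supp_cK_subset (X : Set V) : supp (cK X) ⊆ X :=
  fun v ⟨_, he, hv⟩ => he.2 v hv

lemma supp_cK {X : Set V} (hX : 1 < X.ncard) : supp (cK X) = X := by
  refine (supp_cK_subset X).antisymm fun w hw => ?_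
  obtain ⟨w', hw', hne⟩ := exists_ne_of_one_lt_ncard hX w
  exact ⟨s(w, w'), mem_cK.2 ⟨hne.symm, hw, hw'⟩, Sym2.mem_mk_left _ _⟩

lemma supp_image_mk_subset (v : V) (N : Set V) :
    supp ((fun w => s(v, w)) '' N) ⊆ insert v N := by
  rintro x ⟨_, ⟨w, hw, rfl⟩, hx⟩
  rcases Sym2.mem_iff.1 hx with rfl | rfl
  · exact mem_insert x N
  · exact mem_insert_of_mem v hw

lemma cK_insert {X : Set V} {v : V} (hv : v ∉ X) :
    cK (insert v X) = cK X ∪ (fun w => s(v, w)) '' X := by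
  ext e
  induction e using Sym2.ind with
  | _ a b =>
    simp only [mem_cK, mem_insert_iff, mem_union, mem_image, Sym2.eq_iff]
    by_cases hva : v = a <;> by_cases hvb : v = b <;> aesop

lemma cK_sdiff_edge {U : Set V} {u v : V} (hv : v ∈ U) (huv : u ≠ v) :
    cK U \ {s(u, v)} = cK (U \ {v}) ∪ (fun w => s(v, w)) '' (U \ {u, v}) := by
  ext e
  induction e using Sym2.ind with
  | _ a b =>
    simp only [mem_sdiff, mem_cK, mem_union, mem_image, mem_singleton_iff, mem_insert_iff,
      Sym2.eq_iff]
    by_cases hva : v = a <;> by_cases hvb : v = b <;> aesop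

lemma cK_sdiff_union_cK_sdiff {U : Set V} {u v : V} (hu : u ∈ U) (hv : v ∈ U) (huv : u ≠ v) :
    cK (U \ {v}) ∪ cK (U \ {u}) = cK U \ {s(u, v)} := by
  ext e
  induction e using Sym2.ind with
  | _ a b =>
    simp only [mem_union, mem_cK, mem_sdiff, mem_singleton_iff, Sym2.eq_iff]
    by_cases hva : a = v <;> by_cases hvb : b = v <;> aesop

namespace IsARMOn

variable {m : ℕ} {W : Set V} {A : Matroid (Sym2 V)}

lemma subset_cK_of_indep (hA : IsARMOn m W A) {E : Set (Sym2 V)} (hE : A.Indep E) :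
    E ⊆ cK W :=
  hA.1 ▸ hE.subset_ground

lemma closure_subset_cK_supp (hA : IsARMOn m W A) (hm : 0 < m) {E : Set (Sym2 V)}
    (hE : E ⊆ cK W) : A.closure E ⊆ cK (supp E) := by
  simpa using hA.2.1 E ∅ hE (empty_subset _) (by simpa using hm)

lemma rigid_cK (hA : IsARMOn m W A) (hm : 0 < m) {X : Set V} (hXW : X ⊆ W)
    (hX : 1 < X.ncard) : Rigid A (cK X) := by
  refine (hA.closure_subset_cK_supp hm (cK_mono hXW)).antisymm ?_
  rw [supp_cK hX]
  exact A.subset_closure (cK X) (hA.1 ▸ cK_mono hXW)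

lemma mk_notMem_closure_union (hA : IsARMOn m W A) {E F : Set (Sym2 V)} (hE : E ⊆ cK W)
    (hF : F ⊆ cK W) (hEF : (supp E ∩ supp F).ncard < m) {a b : V} (ha : a ∉ supp E)
    (hb : b ∉ supp F) : s(a, b) ∉ A.closure (E ∪ F) := fun hab =>
  (hA.2.1 E F hE hF hEF hab).elim (fun h => ha (h.2 a (Sym2.mem_mk_left a b)))
    (fun h => hb (h.2 b (Sym2.mem_mk_right a b)))

/-- A circuit through a new edge `vw` would put `vw` in the closure of `F` and the other new edges,
whose supports meet in fewer than `m` vertices, against (C1). -/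
lemma indep_union_image_mk (hA : IsARMOn m W A) {F : Set (Sym2 V)} (hF : A.Indep F)
    {v : V} (hvF : v ∉ supp F) (hvW : v ∈ W) {N : Set V} (hNW : N ⊆ W) (hvN : v ∉ N)
    (hNfin : N.Finite) (hNm : N.ncard ≤ m) :
    A.Indep (F ∪ (fun w => s(v, w)) '' N) := by
  have hNE : ∀ N' ⊆ N, (fun w => s(v, w)) '' N' ⊆ cK W := by
    rintro N' hN' _ ⟨w, hw, rfl⟩
    exact mem_cK.2 ⟨fun h => hvN (h ▸ hN' hw), hvW, hNW (hN' hw)⟩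
  by_contra hdep
  obtain ⟨C, hCsub, hC⟩ := ((not_indep_iff (hA.1 ▸ union_subset (hA.subset_cK_of_indep hF)
    (hNE N subset_rfl))).1 hdep).exists_isCircuit_subset
  obtain ⟨e, heC, heF⟩ : ∃ e ∈ C, e ∉ F :=
    not_subset.1 fun h => hC.dep.not_indep (hF.subset h)
  obtain ⟨w, hwN, rfl⟩ := (hCsub heC).resolve_left heF
  have hCw : C \ {s(v, w)} ⊆ F ∪ (fun w => s(v, w)) '' (N \ {w}) := by
    rintro x ⟨hxC, hxe⟩
    rcases hCsub hxC with hxF | ⟨w', hw', rfl⟩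
    · exact Or.inl hxF
    · exact Or.inr ⟨w', ⟨hw', fun h => hxe (h ▸ rfl)⟩, rfl⟩
  have hsupp := supp_image_mk_subset v (N \ {w})
  have hcard : (supp F ∩ supp ((fun w => s(v, w)) '' (N \ {w}))).ncard < m := by
    have hsub : supp F ∩ supp ((fun w => s(v, w)) '' (N \ {w})) ⊆ N \ {w} := fun x ⟨hxF, hx⟩ =>
      (hsupp hx).resolve_left fun h => hvF (h ▸ hxF)
    calc _ ≤ (N \ {w}).ncard := ncard_le_ncard hsub hNfin.sdiff
      _ < N.ncard := ncard_sdiff_singleton_lt_of_mem hwN hNfin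
      _ ≤ m := hNm
  have hwsupp : w ∉ supp ((fun w => s(v, w)) '' (N \ {w})) := fun hw =>
    (hsupp hw).elim (fun h => hvN (h ▸ hwN)) fun h => h.2 rfl
  exact hA.mk_notMem_closure_union (hA.subset_cK_of_indep hF) (hNE _ sdiff_subset) hcard hvF
    hwsupp (A.closure_subset_closure hCw (hC.mem_closure_sdiff_singleton_of_mem heC))

lemma indep_cK (hA : IsARMOn m W A) {X : Set V} (hXW : X ⊆ W) (hX : X.Finite)
    (hXm : X.ncard ≤ m + 1) : A.Indep (cK X) := by
  induction X, hX using Set.Finite.induction_on with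
  | empty => simp
  | @insert v X hvX hX ih =>
    rw [ncard_insert_of_notMem hvX hX] at hXm
    rw [cK_insert hvX]
    exact hA.indep_union_image_mk (ih ((subset_insert v X).trans hXW) (by omega))
      (fun h => hvX (supp_cK_subset X h)) (hXW (mem_insert v X))
      ((subset_insert v X).trans hXW) hvX hX (by omega)

variable {U : Set V} (hA : IsARMOn m W A) (hUW : U ⊆ W) (hU : U.ncard = m + 2)
include hA hUW hU

lemma indep_cK_sdiff_edge {u v : V} (hu : u ∈ U) (hv : v ∈ U) (huv : u ≠ v) :
    A.Indep (cK U \ {s(u, v)}) := by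
  have hUfin : U.Finite := finite_of_ncard_ne_zero (by omega)
  rw [cK_sdiff_edge hv huv]
  refine hA.indep_union_image_mk (N := U \ {u, v})
    (hA.indep_cK (X := U \ {v}) (sdiff_subset.trans hUW) hUfin.sdiff ?_)
    (fun h => (supp_cK_subset _ h).2 rfl) (hUW hv) (sdiff_subset.trans hUW)
    (fun h => h.2 (mem_insert_of_mem u rfl)) hUfin.sdiff ?_
  · rw [ncard_sdiff_singleton_of_mem hv]; omega
  · rw [ncard_sdiff (pair_subset hu hv), ncard_pair huv]; omega

lemma dep_cK (hm : 0 < m) : A.Dep (cK U) := by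
  obtain ⟨u, hu⟩ := nonempty_of_ncard_ne_zero (s := U) (by omega)
  obtain ⟨v, hv, hvu⟩ := exists_ne_of_one_lt_ncard (by omega : 1 < U.ncard) u
  have hcard : ∀ x ∈ U, 1 < (U \ {x}).ncard := fun x hx => by
    rw [ncard_sdiff_singleton_of_mem hx]; omega
  have hinter : (U \ {v}) ∩ (U \ {u}) = U \ {u, v} := by
    ext; simp only [mem_inter_iff, mem_sdiff, mem_singleton_iff, mem_insert_iff]; tauto
  have hcover : (U \ {v}) ∪ (U \ {u}) = U := by
    ext x
    by_cases hxv : x = v <;> aesop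
  have hrigid : Rigid A (cK (U \ {v}) ∪ cK (U \ {u})) := by
    refine hA.2.2 _ _ (cK_mono (sdiff_subset.trans hUW)) (cK_mono (sdiff_subset.trans hUW))
      (hA.rigid_cK hm (sdiff_subset.trans hUW) (hcard v hv))
      (hA.rigid_cK hm (sdiff_subset.trans hUW) (hcard u hu)) ?_
    rw [supp_cK (hcard v hv), supp_cK (hcard u hu), hinter, ncard_sdiff (pair_subset hu hv),
      ncard_pair hvu.symm]
    omega
  rw [Rigid, supp_union, supp_cK (hcard v hv), supp_cK (hcard u hu), hcover,
    cK_sdiff_union_cK_sdiff hu hv hvu.symm] at hrigid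
  have huv : s(u, v) ∈ cK U := mem_cK.2 ⟨hvu.symm, hu, hv⟩
  exact (not_indep_iff (hA.1 ▸ cK_mono hUW)).1 fun hind =>
    hind.notMem_closure_sdiff_of_mem huv (by rwa [hrigid])

end IsARMOn

end

theorem stmt_4_general {V : Type*} (m : ℕ) (hm : 0 < m)
    (A : Matroid (Sym2 V)) (hA : IsARMOn m (univ : Set V) A)
    (U : Set V) (hU : U.ncard = m + 2) :
    A.IsCircuit' (cK U) := by
  have hC : A.IsCircuit (cK U) := by
    refine isCircuit_iff_dep_forall_sdiff_singleton_indep.2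
      ⟨hA.dep_cK (subset_univ U) hU hm, fun e he => ?_⟩
    induction e using Sym2.ind with
    | _ u v =>
      obtain ⟨huv, hu, hv⟩ := mem_cK.1 he
      exact hA.indep_cK_sdiff_edge (subset_univ U) hU hu hv huv
  exact ⟨hC.dep, fun D hD => hC.ssubset_indep hD⟩

theorem stmt_4 {V : Type*} [Fintype V] [DecidableEq V] (m : ℕ) (hm : 0 < m)
    (A : Matroid (Sym2 V)) (hA : IsARMOn m (univ : Set V) A)
    (hV : m + 1 ≤ Fintype.card V)
    (U : Set V) (hU : U.ncard = m + 2) :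
    A.IsCircuit' (cK U) :=
  stmt_4_general m hm A hA U hU
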